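/- Assume K has characteristic 0. Then every semilinear representation V of H over K that is finite-dimensional as a K-vector space is a direct sum of simple subrepresentations: there exist subrepresentations W₁,…,W_r of V, each simple as a semilinear representation of H over K, such that V = W₁ ⊕ ⋯ ⊕ W_r. -/

import Mathlib

/-- A semilinear representation of `H` over `K`: a `K`-vector space `V` with an
action of `H` by additive automorphisms such that `h • (c • v) = (h • c) • (h • v)`. -/
structure SemilinearRep (K H : Type) [Field K] [Group H] [MulSemiringAction H K] where
  carrier : Type
  [isAddCommGroup : AddCommGroup carrier]
  [isModule : Module K carrier]
  [isDistribMulAction : DistribMulAction H carrier]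
  semilinear : ∀ (h : H) (c : K) (v : carrier), h • (c • v) = (h • c) • (h • v)

attribute [instance] SemilinearRep.isAddCommGroup SemilinearRep.isModule
  SemilinearRep.isDistribMulAction

variable {K H : Type} [Field K] [Group H] [MulSemiringAction H K]

/-- An `H`-invariant `K`-subspace (a subrepresentation). -/
def SemilinearRep.IsSubrep (V : SemilinearRep K H) (W : Submodule K V.carrier) : Prop :=
  ∀ (h : H), ∀ w ∈ W, h • w ∈ W

/-- A semilinear representation is simple if it is nonzero and its only
subrepresentations are `⊥` and `⊤`. -/
def SemilinearRep.IsSimple (V : SemilinearRep K H) : Prop :=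
  Nontrivial V.carrier ∧
    ∀ W : Submodule K V.carrier, V.IsSubrep W → W = ⊥ ∨ W = ⊤

/-- Two semilinear representations are isomorphic if there is a bijective
`K`-linear `H`-equivariant map between them. -/
def SemilinearRep.Iso (V W : SemilinearRep K H) : Prop :=
  ∃ e : V.carrier ≃ₗ[K] W.carrier, ∀ (h : H) (v : V.carrier), e (h • v) = h • e v

/-- The kernel `H′` of the action of `H` on `K`. -/
def kerAct (K H : Type) [Field K] [Group H] [MulSemiringAction H K] : Subgroup H where
  carrier := {h : H | ∀ c : K, h • c = c}
  one_mem' := fun c => one_smul H c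
  mul_mem' := by
    intro a b ha hb c
    simp only [Set.mem_setOf_eq] at *
    rw [mul_smul, hb, ha]
  inv_mem' := by
    intro a ha c
    simp only [Set.mem_setOf_eq] at *
    conv_lhs => rw [← ha c]
    rw [inv_smul_smul]

/-!
Subrepresentations form a complete sublattice of the lattice of `K`-subspaces; it is modular,
and Noetherian because `V` is finite-dimensional. It is also complemented, by Maschke's averaging
argument done semilinearly: if `π` is a `K`-linear projection onto an invariant `W`, each conjugate
`h ∘ π ∘ h⁻¹` is again `K`-linear (the twists of the scalars by `h⁻¹` and `h` cancel), and
`|H|⁻¹ ∑ₕ h ∘ π ∘ h⁻¹` is an equivariant projection onto `W`, since `|H|⁻¹` is fixed by `H`; its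
kernel is an invariant complement. In a complemented modular Noetherian lattice `⊤` is the
supremum of a finite independent family of atoms, and the atoms here are the simple
subrepresentations.
-/

theorem CompleteSublattice.iSupIndep_coe_iff {α ι : Type*} [CompleteLattice α]
    {L : CompleteSublattice α} {t : ι → L} : iSupIndep (fun i => (t i : α)) ↔ iSupIndep t := by
  refine forall_congr' fun i => ?_
  rw [disjoint_iff, disjoint_iff, ← L.subtype_injective.eq_iff, map_inf, map_iSup₂, map_bot]
  rfl

theorem exists_fin_iSupIndep_isAtom_iSup_eq_top {α : Type*} [CompleteLattice α]
    [IsModularLattice α] [ComplementedLattice α] [WellFoundedGT α] :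
    ∃ (r : ℕ) (t : Fin r → α), iSupIndep t ∧ (∀ i, IsAtom (t i)) ∧ ⨆ i, t i = ⊤ := by
  have := CompleteLattice.isCompactlyGenerated_of_wellFoundedGT (α := α)
  obtain ⟨s, hind, htop, hatoms⟩ := exists_sSupIndep_of_sSup_atoms_eq_top (α := α) sSup_atoms_eq_top
  have := (WellFoundedGT.finite_of_sSupIndep hind).to_subtype
  let e := (Finite.equivFin s).symm
  refine ⟨Nat.card s, fun i => e i, ((sSupIndep_iff s).1 hind).comp e.injective,
    fun i => hatoms (e i).2, ?_⟩
  rw [e.surjective.iSup_comp (fun a : s => (a : α)), ← sSup_eq_iSup', htop]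

namespace SemilinearRep

section Lattice

variable (V : SemilinearRep K H)

theorem isSubrep_sSup {s : Set (Submodule K V.carrier)} (hs : ∀ W ∈ s, V.IsSubrep W) :
    V.IsSubrep (sSup s) := by
  intro h w hw
  rw [sSup_eq_iSup'] at hw ⊢
  refine Submodule.iSup_induction _ (motive := fun w => h • w ∈ _) hw ?_ ?_ ?_
  · exact fun W w hw => Submodule.mem_iSup_of_mem W (hs W W.2 h w hw)
  · simpa only [smul_zero] using Submodule.zero_mem _
  · exact fun x y hx hy => by simpa only [smul_add] using Submodule.add_mem _ hx hy

theorem isSubrep_sInf {s : Set (Submodule K V.carrier)} (hs : ∀ W ∈ s, V.IsSubrep W) :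
    V.IsSubrep (sInf s) := fun h w hw =>
  Submodule.mem_sInf.2 fun W hW => hs W hW h w (Submodule.mem_sInf.1 hw W hW)

def subreps : CompleteSublattice (Submodule K V.carrier) :=
  .mk' {W | V.IsSubrep W} (fun _ hs => V.isSubrep_sSup hs) (fun _ hs => V.isSubrep_sInf hs)

instance : IsModularLattice V.subreps :=
  ⟨fun y _ hxz => IsModularLattice.sup_inf_le_assoc_of_le (y : Submodule K V.carrier) hxz⟩

instance [FiniteDimensional K V.carrier] : WellFoundedGT V.subreps :=
  (Subtype.strictMono_coe _).wellFoundedGT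

theorem isAtom_subreps_iff {W : V.subreps} :
    IsAtom W ↔ (W : Submodule K V.carrier) ≠ ⊥ ∧
      ∀ U : Submodule K V.carrier, U ≤ W → V.IsSubrep U → U = ⊥ ∨ U = W := by
  refine ⟨fun hW => ⟨fun h => hW.1 (Subtype.ext h), fun U hU hUs => ?_⟩,
    fun ⟨hne, hmin⟩ => ⟨fun h => hne (congrArg Subtype.val h), fun U hU => Subtype.ext ?_⟩⟩
  · simpa only [Subtype.ext_iff, CompleteSublattice.coe_bot] using (hW.le_iff (x := ⟨U, hUs⟩)).1 hU
  · exact (hmin U hU.le U.2).resolve_right fun h => hU.ne (Subtype.ext h)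

end Lattice

section Maschke

variable {V : SemilinearRep K H}

def conj (h : H) (f : Module.End K V.carrier) : Module.End K V.carrier where
  toFun v := h • f (h⁻¹ • v)
  map_add' x y := by simp only [smul_add, map_add]
  map_smul' c v := by
    rw [RingHom.id_apply, V.semilinear, map_smul, V.semilinear, smul_inv_smul]

theorem conj_mul_apply (g h : H) (f : Module.End K V.carrier) (v : V.carrier) :
    conj (g * h) f (g • v) = g • conj h f v := by
  simp only [conj, LinearMap.coe_mk, AddHom.coe_mk, mul_inv_rev, mul_smul, inv_smul_smul]

variable [Fintype H]

def average (f : Module.End K V.carrier) : Module.End K V.carrier :=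
  (Fintype.card H : K)⁻¹ • ∑ h, conj h f

theorem average_smul (f : Module.End K V.carrier) (g : H) (v : V.carrier) :
    average f (g • v) = g • average f v := by
  have hsum : (∑ h, conj h f) (g • v) = g • (∑ h, conj h f) v := by
    rw [LinearMap.sum_apply, LinearMap.sum_apply, Finset.smul_sum,
      ← Equiv.sum_comp (Equiv.mulLeft g)]
    exact Finset.sum_congr rfl fun h _ => conj_mul_apply g h f v
  have hscalar : g • (Fintype.card H : K)⁻¹ = (Fintype.card H : K)⁻¹ := by
    rw [smul_inv'', ← MulSemiringAction.toRingHom_apply, map_natCast]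
  rw [average, LinearMap.smul_apply, LinearMap.smul_apply, hsum, V.semilinear, hscalar]

theorem isProj_average [CharZero K] {W : Submodule K V.carrier} (hW : V.IsSubrep W)
    {f : Module.End K V.carrier} (hf : LinearMap.IsProj W f) :
    LinearMap.IsProj W (average f) where
  map_mem v := by
    rw [average, LinearMap.smul_apply, LinearMap.sum_apply]
    exact W.smul_mem _ <| W.sum_mem fun h _ => hW h _ (hf.map_mem _)
  map_id w hw := by
    have hconj : ∀ h, conj h f w = w := fun h => by
      simp only [conj, LinearMap.coe_mk, AddHom.coe_mk, hf.map_id _ (hW h⁻¹ w hw), smul_inv_smul]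
    have hcard : (Fintype.card H : K) ≠ 0 := Nat.cast_ne_zero.2 Fintype.card_ne_zero
    rw [average, LinearMap.smul_apply, LinearMap.sum_apply]
    simp only [hconj, Finset.sum_const, Finset.card_univ, ← Nat.cast_smul_eq_nsmul K, smul_smul,
      inv_mul_cancel₀ hcard, one_smul]

variable (V)

theorem exists_isSubrep_isCompl [CharZero K] {W : Submodule K V.carrier} (hW : V.IsSubrep W) :
    ∃ C, V.IsSubrep C ∧ IsCompl W C := by
  obtain ⟨C₀, hC₀⟩ := W.exists_isCompl
  have hπ : LinearMap.IsProj W (W.projection C₀ hC₀) :=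
    ⟨W.projection_apply_mem hC₀, fun w hw => W.projection_apply_left hC₀ ⟨w, hw⟩⟩
  refine ⟨LinearMap.ker (average (W.projection C₀ hC₀)), fun h v hv => ?_,
    (isProj_average hW hπ).isCompl⟩
  rw [LinearMap.mem_ker, average_smul, LinearMap.mem_ker.1 hv, smul_zero]

end Maschke

instance [CharZero K] [Finite H] (V : SemilinearRep K H) : ComplementedLattice V.subreps where
  exists_isCompl W := by
    have := Fintype.ofFinite H
    obtain ⟨C, hC, hWC⟩ := V.exists_isSubrep_isCompl W.2
    exact ⟨⟨C, hC⟩, disjoint_iff.2 (Subtype.ext (disjoint_iff.1 hWC.disjoint)),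
      codisjoint_iff.2 (Subtype.ext (codisjoint_iff.1 hWC.codisjoint))⟩

end SemilinearRep

/-- in characteristic 0, every finite-dimensional semilinear
representation is an (internal) direct sum of simple subrepresentations. -/
theorem semilinear_rep_is_semisimple [CharZero K] [Finite H]
    (V : SemilinearRep K H) (hfd : FiniteDimensional K V.carrier) :
    ∃ (r : ℕ) (W : Fin r → Submodule K V.carrier),
      (∀ i, V.IsSubrep (W i)) ∧
      (∀ i, W i ≠ ⊥ ∧
        ∀ U : Submodule K V.carrier, U ≤ W i → V.IsSubrep U → U = ⊥ ∨ U = W i) ∧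
      DirectSum.IsInternal W := by
  obtain ⟨r, W, hind, hatom, htop⟩ := exists_fin_iSupIndep_isAtom_iSup_eq_top (α := V.subreps)
  refine ⟨r, fun i => W i, fun i => (W i).2, fun i => V.isAtom_subreps_iff.1 (hatom i), ?_⟩
  rw [DirectSum.isInternal_submodule_iff_iSupIndep_and_iSup_eq_top]
  exact ⟨CompleteSublattice.iSupIndep_coe_iff.2 hind, by
    rw [← CompleteSublattice.coe_iSup, htop, CompleteSublattice.coe_top]⟩
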